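/- (Theorem 3: optimality condition for nuclear-norm regularized least squares.) Let λ > 0 and let B_* be a minimizer over B ∈ ℝ^{m×n} of (1/2)·Σ_{(i,j)∈Ω}(B_{ij} − A_{ij})² + λ‖B‖_*, the sum counted with multiplicity of Ω. Then λ·⟨B_* − A_r, UVᵀ⟩ + λ·‖P_{T⊥}(B_*)‖_* ≤ ⟨R_Ω(B_* − A), A_r − B_*⟩. -/

import Mathlib

open scoped BigOperators
open Matrix
open MeasureTheory

namespace MC

variable {m n r s : ℕ}

/-- Trace inner product `⟨X,Y⟩ = trace(Xᵀ Y)`. -/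
def ip (A B : Matrix (Fin m) (Fin n) ℝ) : ℝ := ∑ i, ∑ j, A i j * B i j

/-- Frobenius norm. -/
noncomputable def fro (A : Matrix (Fin m) (Fin n) ℝ) : ℝ := Real.sqrt (ip A A)

/-- Largest absolute value of an entry. -/
noncomputable def infNorm (A : Matrix (Fin m) (Fin n) ℝ) : ℝ := ⨆ i, ⨆ j, |A i j|

/-- Nuclear norm: sum of singular values. -/
noncomputable def nuclearNorm (A : Matrix (Fin m) (Fin n) ℝ) : ℝ :=
  ∑ j, Real.sqrt ((show (Aᵀ * A).IsHermitian by
    rw [← Matrix.conjTranspose_eq_transpose_of_trivial]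
    exact Matrix.isHermitian_conjTranspose_mul_self A).eigenvalues j)

/-- Spectral norm: largest singular value. -/
noncomputable def specNorm (A : Matrix (Fin m) (Fin n) ℝ) : ℝ :=
  ⨆ j, Real.sqrt ((show (Aᵀ * A).IsHermitian by
    rw [← Matrix.conjTranspose_eq_transpose_of_trivial]
    exact Matrix.isHermitian_conjTranspose_mul_self A).eigenvalues j)

/-- Sampling operator for a multiset of index pairs. -/
def RΩ (Ω : Multiset (Fin m × Fin n)) (Z : Matrix (Fin m) (Fin n) ℝ) :
    Matrix (Fin m) (Fin n) ℝ :=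
  Matrix.of fun i j => (Ω.count (i, j)) * Z i j

def PT (U : Matrix (Fin m) (Fin r) ℝ) (V : Matrix (Fin n) (Fin r) ℝ)
    (Z : Matrix (Fin m) (Fin n) ℝ) : Matrix (Fin m) (Fin n) ℝ :=
  U * Uᵀ * Z + Z * (V * Vᵀ) - U * Uᵀ * Z * (V * Vᵀ)

def PTperp (U : Matrix (Fin m) (Fin r) ℝ) (V : Matrix (Fin n) (Fin r) ℝ)
    (Z : Matrix (Fin m) (Fin n) ℝ) : Matrix (Fin m) (Fin n) ℝ :=
  (1 - U * Uᵀ) * Z * (1 - V * Vᵀ)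

/-- Objective of nuclear-norm regularized least squares. -/
noncomputable def obj (Ω : Multiset (Fin m × Fin n)) (A : Matrix (Fin m) (Fin n) ℝ)
    (lam : ℝ) (B : Matrix (Fin m) (Fin n) ℝ) : ℝ :=
  (1 / 2) * (Ω.map fun p => (B p.1 p.2 - A p.1 p.2) ^ 2).sum + lam * nuclearNorm B

/-- Uniform probability measure on index pairs. -/
noncomputable def unifPair (m n : ℕ) : Measure (Fin m × Fin n) :=
  (Fintype.card (Fin m × Fin n) : ENNReal)⁻¹ • Measure.count

/-- Law of `s` i.i.d. uniform index pairs. -/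
noncomputable def sampleMeasure (m n s : ℕ) : Measure (Fin s → Fin m × Fin n) :=
  Measure.pi fun _ => unifPair m n

/-- The multiset of sampled indices. -/
def toMS (ω : Fin s → Fin m × Fin n) : Multiset (Fin m × Fin n) :=
  Multiset.map ω Finset.univ.val

/-!
Since `B_*` minimizes a convex objective, the objective does not decrease along the segment
`B_* + t (A_r - B_*)`, `0 < t ≤ 1`. Expanding the quadratic loss, bounding the nuclear norm by
convexity and letting `t → 0` gives `λ (‖B_*‖_* - ‖A_r‖_*) ≤ ⟨R_Ω(B_* - A), A_r - B_*⟩`.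

It remains to show `‖A_r‖_* + ⟨B_* - A_r, UVᵀ⟩ + ‖P_{T⊥}(B_*)‖_* ≤ ‖B_*‖_*`, i.e. that `UVᵀ + W`
is a subgradient of the nuclear norm at `A_r`, where `W = Σ p_j q_jᵀ` comes from a compact SVD of
`P_{T⊥}(B_*)`. Its singular vectors are orthogonal to the columns of `U` and `V`, so the columns
of `U` together with the `p_j`, and those of `V` together with the `q_j`, are orthonormal
families. For any two such families `⟨Σ a_k b_kᵀ, X⟩ ≤ ‖X‖_*`, by Cauchy–Schwarz and Bessel
against an SVD of `X`; this bounds `⟨UVᵀ + W, B_*⟩` by `‖B_*‖_*`, while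
`⟨W, B_*⟩ = ‖P_{T⊥}(B_*)‖_*` and `⟨UVᵀ, A_r⟩ = Σ_{k<r} σ_k ≥ ‖A_r‖_*`.
-/

open Finset

section Orthonormal

variable {ι ι' κ : Type*} [Fintype κ]

structure OrthonormalOn (S : Finset ι) (p : ι → κ → ℝ) : Prop where
  dotProduct_self : ∀ i ∈ S, p i ⬝ᵥ p i = 1
  dotProduct_eq_zero : ∀ i ∈ S, ∀ j ∈ S, i ≠ j → p i ⬝ᵥ p j = 0

variable {S : Finset ι} {p q : ι → κ → ℝ}

lemma OrthonormalOn.dotProduct_eq_ite [DecidableEq ι] (hp : OrthonormalOn S p)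
    {i j : ι} (hi : i ∈ S) (hj : j ∈ S) : p i ⬝ᵥ p j = if i = j then 1 else 0 := by
  split_ifs with h
  · exact h ▸ hp.dotProduct_self i hi
  · exact hp.dotProduct_eq_zero i hi j hj h

lemma OrthonormalOn.sum_sq_dotProduct_le (hp : OrthonormalOn S p) (x : κ → ℝ) :
    ∑ i ∈ S, (p i ⬝ᵥ x) ^ 2 ≤ x ⬝ᵥ x := by
  classical
  have hon : Orthonormal ℝ fun i : S => WithLp.toLp 2 (p i) := by
    rw [orthonormal_iff_ite]
    rintro ⟨i, hi⟩ ⟨j, hj⟩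
    simpa [EuclideanSpace.inner_toLp_toLp, dotProduct_comm] using hp.dotProduct_eq_ite hi hj
  have := hon.sum_inner_products_le (WithLp.toLp 2 x) (s := univ)
  simp only [EuclideanSpace.inner_toLp_toLp, star_trivial, Real.norm_eq_abs, sq_abs,
    EuclideanSpace.norm_eq, Real.sq_sqrt (sum_nonneg fun _ _ => sq_nonneg _)] at this
  rw [Finset.sum_coe_sort S fun i => (x ⬝ᵥ p i) ^ 2] at this
  simp_rw [dotProduct_comm (p _) x]
  simpa only [dotProduct, sq] using this

lemma OrthonormalOn.sum_dotProduct_mul_dotProduct_le {κ' : Type*} [Fintype κ']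
    {q : ι → κ' → ℝ} (hp : OrthonormalOn S p) (hq : OrthonormalOn S q)
    {a : κ → ℝ} {b : κ' → ℝ} (ha : a ⬝ᵥ a ≤ 1) (hb : b ⬝ᵥ b ≤ 1) :
    ∑ i ∈ S, (p i ⬝ᵥ a) * (q i ⬝ᵥ b) ≤ 1 := by
  have hcs := Finset.sum_mul_sq_le_sq_mul_sq S (fun i => p i ⬝ᵥ a) (fun i => q i ⬝ᵥ b)
  have hpa := hp.sum_sq_dotProduct_le a
  have hqb := hq.sum_sq_dotProduct_le b
  have hpa0 : 0 ≤ ∑ i ∈ S, (p i ⬝ᵥ a) ^ 2 := sum_nonneg fun _ _ => sq_nonneg _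
  have hqb0 : 0 ≤ ∑ i ∈ S, (q i ⬝ᵥ b) ^ 2 := sum_nonneg fun _ _ => sq_nonneg _
  nlinarith [mul_le_mul hpa hqb hqb0 (hpa0.trans hpa)]

lemma OrthonormalOn.disjSum {T : Finset ι'} {p' : ι' → κ → ℝ} (hp : OrthonormalOn S p)
    (hp' : OrthonormalOn T p') (horth : ∀ i ∈ S, ∀ j ∈ T, p i ⬝ᵥ p' j = 0) :
    OrthonormalOn (S.disjSum T) (Sum.elim p p') := by
  constructor
  · rintro (i | i) hi <;> simp only [inl_mem_disjSum, inr_mem_disjSum] at hi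
    exacts [hp.dotProduct_self i hi, hp'.dotProduct_self i hi]
  · rintro (i | i) hi (j | j) hj hij <;> simp only [inl_mem_disjSum, inr_mem_disjSum] at hi hj
    · exact hp.dotProduct_eq_zero i hi j hj (fun h => hij (h ▸ rfl))
    · exact horth i hi j hj
    · exact dotProduct_comm (p' i) (p j) ▸ horth j hj i hi
    · exact hp'.dotProduct_eq_zero i hi j hj (fun h => hij (h ▸ rfl))

lemma orthonormalOn_transpose {U : Matrix κ ι ℝ} [Fintype ι] [DecidableEq ι] (hU : Uᵀ * U = 1) :
    OrthonormalOn univ Uᵀ := by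
  have h (i j : ι) : Uᵀ i ⬝ᵥ Uᵀ j = (1 : Matrix ι ι ℝ) i j := by
    rw [← hU, Matrix.mul_apply']; rfl
  exact ⟨fun i _ => by simp [h], fun i _ j _ hij => by simp [h, hij]⟩

end Orthonormal

section InnerProduct

lemma ip_comm (X Y : Matrix (Fin m) (Fin n) ℝ) : ip X Y = ip Y X := by
  simp only [ip, mul_comm]

lemma ip_add_right (X Y Z : Matrix (Fin m) (Fin n) ℝ) : ip X (Y + Z) = ip X Y + ip X Z := by
  simp only [ip, Matrix.add_apply, mul_add, sum_add_distrib]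

lemma ip_sub_right (X Y Z : Matrix (Fin m) (Fin n) ℝ) : ip X (Y - Z) = ip X Y - ip X Z := by
  simp only [ip, Matrix.sub_apply, mul_sub, sum_sub_distrib]

lemma ip_smul_right (c : ℝ) (X Y : Matrix (Fin m) (Fin n) ℝ) : ip X (c • Y) = c * ip X Y := by
  simp only [ip, Matrix.smul_apply, smul_eq_mul, mul_sum, mul_left_comm]

lemma ip_sum_right {ι : Type*} (S : Finset ι) (X : Matrix (Fin m) (Fin n) ℝ)
    (Y : ι → Matrix (Fin m) (Fin n) ℝ) : ip X (∑ k ∈ S, Y k) = ∑ k ∈ S, ip X (Y k) := by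
  simp only [ip, Matrix.sum_apply, mul_sum]
  exact (sum_congr rfl fun _ _ => sum_comm).trans sum_comm

lemma ip_add_left (X Y Z : Matrix (Fin m) (Fin n) ℝ) : ip (X + Y) Z = ip X Z + ip Y Z := by
  simp only [ip_comm _ Z, ip_add_right]

lemma ip_sum_left {ι : Type*} (S : Finset ι) (X : ι → Matrix (Fin m) (Fin n) ℝ)
    (Y : Matrix (Fin m) (Fin n) ℝ) : ip (∑ k ∈ S, X k) Y = ∑ k ∈ S, ip (X k) Y := by
  simp only [ip_comm _ Y, ip_sum_right]

lemma ip_vecMulVec_left (a : Fin m → ℝ) (b : Fin n → ℝ) (X : Matrix (Fin m) (Fin n) ℝ) :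
    ip (vecMulVec a b) X = a ⬝ᵥ (X *ᵥ b) := by
  simp only [ip, vecMulVec_apply, dotProduct, mulVec, mul_sum, mul_assoc, mul_comm (b _)]

lemma ip_vecMulVec_vecMulVec (a c : Fin m → ℝ) (b d : Fin n → ℝ) :
    ip (vecMulVec a b) (vecMulVec c d) = (a ⬝ᵥ c) * (b ⬝ᵥ d) := by
  simp only [ip, vecMulVec_apply, dotProduct, sum_mul_sum]
  exact sum_congr rfl fun _ _ => sum_congr rfl fun _ _ => by ring

end InnerProduct

section Dyads

variable {ι κ κ' : Type*} {S : Finset ι}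

lemma sum_smul_vecMulVec_mulVec [Fintype κ'] {q : ι → κ' → ℝ} (hq : OrthonormalOn S q) (c : ι → ℝ)
    (p : ι → κ → ℝ) {j : ι} (hj : j ∈ S) :
    (∑ k ∈ S, c k • vecMulVec (p k) (q k)) *ᵥ q j = c j • p j := by
  have hdyad (k : ι) : (c k • vecMulVec (p k) (q k)) *ᵥ q j = (c k * (q k ⬝ᵥ q j)) • p k := by
    ext i
    simp only [mulVec, dotProduct, Matrix.smul_apply, vecMulVec_apply, Pi.smul_apply, smul_eq_mul,
      sum_mul, mul_sum]
    exact sum_congr rfl fun _ _ => by ring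
  rw [sum_mulVec, sum_congr rfl fun k hk => hdyad k, sum_eq_single j]
  · rw [hq.dotProduct_self j hj, mul_one]
  · intro k hk hkj
    rw [hq.dotProduct_eq_zero k hk j hj hkj, mul_zero, zero_smul]
  · exact fun h => absurd hj h

lemma mul_transpose_eq_sum_vecMulVec {l : Type*} [Fintype l] (U : Matrix κ l ℝ)
    (V : Matrix κ' l ℝ) : U * Vᵀ = ∑ k, vecMulVec (Uᵀ k) (Vᵀ k) := by
  ext i j
  simp [Matrix.mul_apply, Matrix.sum_apply, vecMulVec_apply]

end Dyads

lemma ip_sum_vecMulVec_le {ι ι' : Type*} {S : Finset ι} {K : Finset ι'}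
    {p : ι → Fin m → ℝ} {q : ι → Fin n → ℝ} (hp : OrthonormalOn S p) (hq : OrthonormalOn S q)
    {c : ι' → ℝ} {a : ι' → Fin m → ℝ} {b : ι' → Fin n → ℝ} (hc : ∀ k ∈ K, 0 ≤ c k)
    (ha : ∀ k ∈ K, a k ⬝ᵥ a k ≤ 1) (hb : ∀ k ∈ K, b k ⬝ᵥ b k ≤ 1) :
    ip (∑ j ∈ S, vecMulVec (p j) (q j)) (∑ k ∈ K, c k • vecMulVec (a k) (b k)) ≤ ∑ k ∈ K, c k := by
  rw [ip_sum_right]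
  refine sum_le_sum fun k hk => ?_
  have hdyad : ip (∑ j ∈ S, vecMulVec (p j) (q j)) (vecMulVec (a k) (b k))
      = ∑ j ∈ S, (p j ⬝ᵥ a k) * (q j ⬝ᵥ b k) := by
    simp only [ip_sum_left, ip_vecMulVec_vecMulVec]
  rw [ip_smul_right, hdyad]
  exact mul_le_of_le_one_right (hc k hk)
    (hp.sum_dotProduct_mul_dotProduct_le hq (ha k hk) (hb k hk))

lemma ip_sum_vecMulVec_sum_smul_vecMulVec {ι : Type*} {S : Finset ι} {p : ι → Fin m → ℝ}
    {q : ι → Fin n → ℝ} (hp : OrthonormalOn S p) (hq : OrthonormalOn S q) (c : ι → ℝ) :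
    ip (∑ j ∈ S, vecMulVec (p j) (q j)) (∑ j ∈ S, c j • vecMulVec (p j) (q j)) = ∑ j ∈ S, c j := by
  rw [ip_sum_left]
  refine sum_congr rfl fun j hj => ?_
  rw [ip_vecMulVec_left, sum_smul_vecMulVec_mulVec hq c p hj, dotProduct_smul,
    hp.dotProduct_self j hj, smul_eq_mul, mul_one]

lemma eq_sum_vecMulVec_mulVec {l κ : Type*} [Fintype κ] {q : κ → κ → ℝ}
    (hq : OrthonormalOn univ q) (X : Matrix l κ ℝ) :
    X = ∑ j, vecMulVec (X *ᵥ q j) (q j) := by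
  classical
  set P : Matrix κ κ ℝ := Matrix.of q
  have hPPt : P * Pᵀ = 1 := by
    ext i j
    rw [Matrix.mul_apply', Matrix.one_apply]
    exact hq.dotProduct_eq_ite (mem_univ i) (mem_univ j)
  have hPtP : Pᵀ * P = ∑ j, vecMulVec (q j) (q j) := by
    have h := mul_transpose_eq_sum_vecMulVec Pᵀ Pᵀ
    rwa [transpose_transpose] at h
  simp only [← mul_vecMulVec, ← Matrix.mul_sum, ← hPtP, mul_eq_one_comm.mp hPPt, Matrix.mul_one]

section SVD

variable {ι : Type*}

structure IsSVD (X : Matrix (Fin m) (Fin n) ℝ) (S : Finset ι) (σ : ι → ℝ)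
    (p : ι → Fin m → ℝ) (q : ι → Fin n → ℝ) : Prop where
  pos : ∀ j ∈ S, 0 < σ j
  orthonormalOn_left : OrthonormalOn S p
  orthonormalOn_right : OrthonormalOn S q
  eq_sum : X = ∑ j ∈ S, σ j • vecMulVec (p j) (q j)

variable {X : Matrix (Fin m) (Fin n) ℝ} {S : Finset ι} {σ : ι → ℝ} {p : ι → Fin m → ℝ}
  {q : ι → Fin n → ℝ} {j : ι}

lemma IsSVD.mulVec_right (h : IsSVD X S σ p q) (hj : j ∈ S) : X *ᵥ q j = σ j • p j := by
  rw [h.eq_sum]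
  exact sum_smul_vecMulVec_mulVec h.orthonormalOn_right σ p hj

lemma IsSVD.transpose_mulVec_left (h : IsSVD X S σ p q) (hj : j ∈ S) :
    Xᵀ *ᵥ p j = σ j • q j := by
  rw [h.eq_sum, transpose_sum]
  simp only [transpose_smul, transpose_vecMulVec]
  exact sum_smul_vecMulVec_mulVec h.orthonormalOn_left σ q hj

lemma IsSVD.mulVec_left_eq_zero {k : Type*} [Fintype k] (h : IsSVD X S σ p q)
    {W : Matrix k (Fin m) ℝ} (hW : W * X = 0) (hj : j ∈ S) : W *ᵥ p j = 0 := by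
  have hσ : W *ᵥ (σ j • p j) = 0 := by rw [← h.mulVec_right hj, mulVec_mulVec, hW, zero_mulVec]
  rwa [mulVec_smul, smul_eq_zero_iff_right (h.pos j hj).ne'] at hσ

lemma IsSVD.mulVec_right_eq_zero {k : Type*} [Fintype k] (h : IsSVD X S σ p q)
    {W : Matrix (Fin n) k ℝ} (hW : X * W = 0) (hj : j ∈ S) : Wᵀ *ᵥ q j = 0 := by
  have hσ : Wᵀ *ᵥ (σ j • q j) = 0 := by
    rw [← h.transpose_mulVec_left hj, mulVec_mulVec, ← transpose_mul, hW, transpose_zero,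
      zero_mulVec]
  rwa [mulVec_smul, smul_eq_zero_iff_right (h.pos j hj).ne'] at hσ

end SVD

lemma exists_eigenbasis_transpose_mul_self (X : Matrix (Fin m) (Fin n) ℝ) :
    ∃ (ev : Fin n → ℝ) (q : Fin n → Fin n → ℝ), OrthonormalOn univ q ∧
      (∀ j, (Xᵀ * X) *ᵥ q j = ev j • q j) ∧ nuclearNorm X = ∑ j, √(ev j) := by
  have hX : (Xᵀ * X).IsHermitian := by
    rw [← conjTranspose_eq_transpose_of_trivial]
    exact isHermitian_conjTranspose_mul_self X
  have h (j k : Fin n) :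
      hX.eigenvectorBasis k ⬝ᵥ hX.eigenvectorBasis j = if j = k then 1 else 0 := by
    rw [← orthonormal_iff_ite.1 hX.eigenvectorBasis.orthonormal j k,
      EuclideanSpace.inner_eq_star_dotProduct, star_trivial]
  exact ⟨hX.eigenvalues, fun j => hX.eigenvectorBasis j,
    ⟨fun j _ => by simp [h], fun j _ k _ hjk => by simp [h, Ne.symm hjk]⟩,
    hX.mulVec_eigenvectorBasis, rfl⟩

theorem exists_isSVD (X : Matrix (Fin m) (Fin n) ℝ) :
    ∃ (S : Finset (Fin n)) (σ : Fin n → ℝ) (p : Fin n → Fin m → ℝ) (q : Fin n → Fin n → ℝ),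
      IsSVD X S σ p q ∧ nuclearNorm X = ∑ j ∈ S, σ j := by
  obtain ⟨ev, q, hq, heig, hnuc⟩ := exists_eigenbasis_transpose_mul_self X
  set σ : Fin n → ℝ := fun j => √(ev j)
  set S := univ.filter fun j => 0 < σ j
  set p : Fin n → Fin m → ℝ := fun j => (σ j)⁻¹ • (X *ᵥ q j)
  have hXq (j k : Fin n) : (X *ᵥ q j) ⬝ᵥ (X *ᵥ q k) = ev k * (q j ⬝ᵥ q k) := by
    rw [← smul_eq_mul, ← dotProduct_smul, ← heig, ← mulVec_mulVec,
      dotProduct_mulVec (q j) Xᵀ, vecMul_transpose]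
  have hev (j : Fin n) : ev j = (X *ᵥ q j) ⬝ᵥ (X *ᵥ q j) := by
    rw [hXq, hq.dotProduct_self j (mem_univ j), mul_one]
  have hσsq (j : Fin n) : σ j * σ j = ev j :=
    Real.mul_self_sqrt (hev j ▸ Fintype.sum_nonneg fun _ => mul_self_nonneg _)
  have hXq0 {j : Fin n} (hj : σ j = 0) : X *ᵥ q j = 0 := by
    rw [← dotProduct_self_eq_zero, ← hev, ← hσsq, hj, mul_zero]
  have hXq_eq (j : Fin n) : X *ᵥ q j = σ j • p j := by
    by_cases hj : σ j = 0
    · rw [hXq0 hj, hj, zero_smul]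
    · exact (smul_inv_smul₀ hj _).symm
  refine ⟨S, σ, p, q, ⟨fun j hj => (mem_filter.1 hj).2, ?_, ?_, ?_⟩, ?_⟩
  · have hpp (j k : Fin n) : p j ⬝ᵥ p k = (σ j)⁻¹ * (σ k)⁻¹ * (ev k * (q j ⬝ᵥ q k)) := by
      simp only [p, smul_dotProduct, dotProduct_smul, hXq, smul_eq_mul]
      ring
    refine ⟨fun j hj => ?_, fun j _ k _ hjk => ?_⟩
    · have hσ : σ j ≠ 0 := (mem_filter.1 hj).2.ne'
      rw [hpp, hq.dotProduct_self j (mem_univ j), ← hσsq]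
      field_simp
    · rw [hpp, hq.dotProduct_eq_zero j (mem_univ j) k (mem_univ k) hjk, mul_zero, mul_zero]
  · exact ⟨fun j _ => hq.dotProduct_self j (mem_univ j),
      fun j _ k _ => hq.dotProduct_eq_zero j (mem_univ j) k (mem_univ k)⟩
  · have hvanish (j : Fin n) (hj : vecMulVec (X *ᵥ q j) (q j) ≠ 0) : 0 < σ j := by
      refine (Real.sqrt_nonneg _).lt_of_ne fun h => hj ?_
      rw [hXq0 h.symm, zero_vecMulVec]
    calc X = ∑ j, vecMulVec (X *ᵥ q j) (q j) := eq_sum_vecMulVec_mulVec hq X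
      _ = ∑ j ∈ S, vecMulVec (X *ᵥ q j) (q j) :=
        (sum_filter_of_ne fun j _ hj => hvanish j hj).symm
      _ = ∑ j ∈ S, σ j • vecMulVec (p j) (q j) := by simp only [hXq_eq, smul_vecMulVec]
  · exact hnuc.trans (sum_filter_of_ne fun j _ hj => (Real.sqrt_nonneg _).lt_of_ne' hj).symm

section NuclearNorm

variable {ι : Type*} {S : Finset ι} {p : ι → Fin m → ℝ} {q : ι → Fin n → ℝ}

lemma ip_sum_vecMulVec_le_nuclearNorm (hp : OrthonormalOn S p) (hq : OrthonormalOn S q)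
    (X : Matrix (Fin m) (Fin n) ℝ) : ip (∑ j ∈ S, vecMulVec (p j) (q j)) X ≤ nuclearNorm X := by
  obtain ⟨K, σ, a, b, hX, hnuc⟩ := exists_isSVD X
  rw [hnuc, hX.eq_sum]
  exact ip_sum_vecMulVec_le hp hq (fun k hk => (hX.pos k hk).le)
    (fun k hk => (hX.orthonormalOn_left.dotProduct_self k hk).le)
    (fun k hk => (hX.orthonormalOn_right.dotProduct_self k hk).le)

lemma exists_ip_eq_nuclearNorm (X : Matrix (Fin m) (Fin n) ℝ) :
    ∃ (S : Finset (Fin n)) (p : Fin n → Fin m → ℝ) (q : Fin n → Fin n → ℝ),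
      OrthonormalOn S p ∧ OrthonormalOn S q ∧
        nuclearNorm X = ip (∑ j ∈ S, vecMulVec (p j) (q j)) X := by
  obtain ⟨S, σ, p, q, hX, hnuc⟩ := exists_isSVD X
  refine ⟨S, p, q, hX.orthonormalOn_left, hX.orthonormalOn_right, ?_⟩
  rw [hnuc, hX.eq_sum,
    ip_sum_vecMulVec_sum_smul_vecMulVec hX.orthonormalOn_left hX.orthonormalOn_right]

lemma convexOn_nuclearNorm : ConvexOn ℝ Set.univ (nuclearNorm : Matrix (Fin m) (Fin n) ℝ → ℝ) := by
  refine ⟨convex_univ, fun X _ Y _ a b ha hb _ => ?_⟩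
  obtain ⟨S, p, q, hp, hq, h⟩ := exists_ip_eq_nuclearNorm (a • X + b • Y)
  rw [h, ip_add_right, ip_smul_right, ip_smul_right, smul_eq_mul, smul_eq_mul]
  gcongr <;> exact ip_sum_vecMulVec_le_nuclearNorm hp hq _

lemma nuclearNorm_sum_smul_vecMulVec_le {κ : Type*} {K : Finset κ} {c : κ → ℝ}
    {a : κ → Fin m → ℝ} {b : κ → Fin n → ℝ} (hc : ∀ k ∈ K, 0 ≤ c k)
    (ha : ∀ k ∈ K, a k ⬝ᵥ a k ≤ 1) (hb : ∀ k ∈ K, b k ⬝ᵥ b k ≤ 1) :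
    nuclearNorm (∑ k ∈ K, c k • vecMulVec (a k) (b k)) ≤ ∑ k ∈ K, c k := by
  obtain ⟨S, p, q, hp, hq, h⟩ := exists_ip_eq_nuclearNorm (∑ k ∈ K, c k • vecMulVec (a k) (b k))
  rw [h]
  exact ip_sum_vecMulVec_le hp hq hc ha hb

end NuclearNorm

section Subgradient

variable {U : Matrix (Fin m) (Fin r) ℝ} {V : Matrix (Fin n) (Fin r) ℝ}

lemma transpose_mul_PTperp (hU : Uᵀ * U = 1) (B : Matrix (Fin m) (Fin n) ℝ) :
    Uᵀ * PTperp U V B = 0 := by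
  have hproj : Uᵀ * (1 - U * Uᵀ) = 0 := by
    rw [Matrix.mul_sub, Matrix.mul_one, ← Matrix.mul_assoc, hU, Matrix.one_mul, sub_self]
  rw [PTperp, ← Matrix.mul_assoc, ← Matrix.mul_assoc, hproj, Matrix.zero_mul, Matrix.zero_mul]

lemma PTperp_mul (hV : Vᵀ * V = 1) (B : Matrix (Fin m) (Fin n) ℝ) : PTperp U V B * V = 0 := by
  have hproj : (1 - V * Vᵀ) * V = 0 := by
    rw [Matrix.sub_mul, Matrix.one_mul, Matrix.mul_assoc, hV, Matrix.mul_one, sub_self]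
  rw [PTperp, Matrix.mul_assoc, hproj, Matrix.mul_zero]

lemma dotProduct_PTperp_mulVec {a : Fin m → ℝ} {b : Fin n → ℝ} (ha : Uᵀ *ᵥ a = 0)
    (hb : Vᵀ *ᵥ b = 0) (B : Matrix (Fin m) (Fin n) ℝ) :
    a ⬝ᵥ (PTperp U V B *ᵥ b) = a ⬝ᵥ (B *ᵥ b) := by
  simp only [PTperp, ← mulVec_mulVec, sub_mulVec, one_mulVec, hb, mulVec_zero, sub_zero,
    dotProduct_sub, dotProduct_mulVec a U, ← mulVec_transpose, ha, zero_dotProduct]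

theorem nuclearNorm_add_ip_add_nuclearNorm_PTperp_le (hU : Uᵀ * U = 1) (hV : Vᵀ * V = 1)
    {s : Fin r → ℝ} (hs : ∀ k, 0 ≤ s k) (B : Matrix (Fin m) (Fin n) ℝ) :
    nuclearNorm (∑ k, s k • vecMulVec (Uᵀ k) (Vᵀ k))
        + ip (B - ∑ k, s k • vecMulVec (Uᵀ k) (Vᵀ k)) (U * Vᵀ) + nuclearNorm (PTperp U V B)
      ≤ nuclearNorm B := by
  set Ar := ∑ k, s k • vecMulVec (Uᵀ k) (Vᵀ k)
  have hUo := orthonormalOn_transpose hU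
  have hVo := orthonormalOn_transpose hV
  obtain ⟨S, τ, p, q, hM, hnuc⟩ := exists_isSVD (PTperp U V B)
  have hUp {j : Fin n} (hj : j ∈ S) : Uᵀ *ᵥ p j = 0 :=
    hM.mulVec_left_eq_zero (transpose_mul_PTperp hU B) hj
  have hVq {j : Fin n} (hj : j ∈ S) : Vᵀ *ᵥ q j = 0 :=
    hM.mulVec_right_eq_zero (PTperp_mul hV B) hj
  have hW : ip (∑ j ∈ S, vecMulVec (p j) (q j)) B = nuclearNorm (PTperp U V B) := by
    rw [hnuc, ← ip_sum_vecMulVec_sum_smul_vecMulVec hM.orthonormalOn_left hM.orthonormalOn_right,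
      ← hM.eq_sum, ip_sum_left, ip_sum_left]
    refine sum_congr rfl fun j hj => ?_
    rw [ip_vecMulVec_left, ip_vecMulVec_left, dotProduct_PTperp_mulVec (hUp hj) (hVq hj)]
  have hUVAr : ip (U * Vᵀ) Ar = ∑ k, s k := by
    rw [mul_transpose_eq_sum_vecMulVec]
    exact ip_sum_vecMulVec_sum_smul_vecMulVec hUo hVo s
  have hAr : nuclearNorm Ar ≤ ∑ k, s k :=
    nuclearNorm_sum_smul_vecMulVec_le (fun k _ => hs k)
      (fun k hk => (hUo.dotProduct_self k hk).le) (fun k hk => (hVo.dotProduct_self k hk).le)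
  have hfamily : ip (U * Vᵀ) B + ip (∑ j ∈ S, vecMulVec (p j) (q j)) B ≤ nuclearNorm B := by
    have hUpo := hUo.disjSum hM.orthonormalOn_left fun k _ j hj => congrFun (hUp hj) k
    have hVqo := hVo.disjSum hM.orthonormalOn_right fun k _ j hj => congrFun (hVq hj) k
    have := ip_sum_vecMulVec_le_nuclearNorm hUpo hVqo B
    rw [sum_disjSum, ip_add_left] at this
    rw [mul_transpose_eq_sum_vecMulVec]
    exact this
  rw [ip_comm, ip_sub_right, hUVAr, ← hW]
  linarith

end Subgradient

section Optimality

open Filter Topology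

lemma nonneg_of_forall_add_mul_nonneg {a b : ℝ} (h : ∀ t, 0 < t → t ≤ 1 → 0 ≤ a + t * b) :
    0 ≤ a := by
  refine ge_of_tendsto (?_ : Tendsto (fun t => a + t * b) (𝓝[>] 0) (𝓝 a)) ?_
  · have hcont : Continuous fun t : ℝ => a + t * b := by fun_prop
    simpa using (hcont.tendsto 0).mono_left nhdsWithin_le_nhds
  filter_upwards [Ioc_mem_nhdsGT one_pos] with t ht using h t ht.1 ht.2

variable {Ω : Multiset (Fin m × Fin n)}

lemma sum_map_mul_eq_ip_RΩ (C D : Matrix (Fin m) (Fin n) ℝ) :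
    (Ω.map fun p => C p.1 p.2 * D p.1 p.2).sum = ip (RΩ Ω C) D := by
  rw [sum_multiset_map_count, sum_subset (subset_univ Ω.toFinset) fun p _ hp => by
    rw [Multiset.count_eq_zero.2 fun h => hp (Multiset.mem_toFinset.2 h), zero_smul],
    ip, ← Fintype.sum_prod_type']
  simp only [RΩ, of_apply, nsmul_eq_mul, mul_assoc]

lemma obj_eq (A : Matrix (Fin m) (Fin n) ℝ) (lam : ℝ) (B : Matrix (Fin m) (Fin n) ℝ) :
    obj Ω A lam B = 1 / 2 * ip (RΩ Ω (B - A)) (B - A) + lam * nuclearNorm B := by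
  simp only [obj, ← sum_map_mul_eq_ip_RΩ, Matrix.sub_apply, sq]

lemma ip_RΩ_add_smul (E D : Matrix (Fin m) (Fin n) ℝ) (t : ℝ) :
    ip (RΩ Ω (E + t • D)) (E + t • D)
      = ip (RΩ Ω E) E + 2 * t * ip (RΩ Ω E) D + t ^ 2 * ip (RΩ Ω D) D := by
  simp only [ip, RΩ, of_apply, Matrix.add_apply, Matrix.smul_apply, smul_eq_mul, mul_sum,
    ← sum_add_distrib]
  exact sum_congr rfl fun _ _ => sum_congr rfl fun _ _ => by ring

theorem mul_nuclearNorm_sub_le_of_forall_obj_le {A Bstar : Matrix (Fin m) (Fin n) ℝ} {lam : ℝ}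
    (hlam : 0 ≤ lam) (hmin : ∀ B, obj Ω A lam Bstar ≤ obj Ω A lam B)
    (C : Matrix (Fin m) (Fin n) ℝ) :
    lam * (nuclearNorm Bstar - nuclearNorm C) ≤ ip (RΩ Ω (Bstar - A)) (C - Bstar) := by
  set D := C - Bstar
  refine sub_nonneg.1 (nonneg_of_forall_add_mul_nonneg (b := ip (RΩ Ω D) D / 2)
    fun t ht0 ht1 => ?_)
  have hconv : nuclearNorm (Bstar + t • D)
      ≤ (1 - t) * nuclearNorm Bstar + t * nuclearNorm C := by
    rw [show Bstar + t • D = (1 - t) • Bstar + t • C by module]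
    simpa only [smul_eq_mul] using convexOn_nuclearNorm.2 (Set.mem_univ Bstar) (Set.mem_univ C)
      (sub_nonneg.2 ht1) ht0.le (by ring)
  have hobj := hmin (Bstar + t • D)
  rw [obj_eq, obj_eq, show Bstar + t • D - A = (Bstar - A) + t • D by abel, ip_RΩ_add_smul] at hobj
  have hscaled : 0 ≤ t * (ip (RΩ Ω (Bstar - A)) D - lam * (nuclearNorm Bstar - nuclearNorm C)
      + t * (ip (RΩ Ω D) D / 2)) := by
    nlinarith [mul_le_mul_of_nonneg_left hconv hlam]
  exact (mul_nonneg_iff_of_pos_left ht0).1 hscaled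

end Optimality

lemma transpose_mul_self_eq_one_of_orthonormal {k l : ℕ} {w : Fin k → Fin l → ℝ}
    (hw : ∀ i i', ∑ j, w i j * w i' j = if i = i' then 1 else 0) {f : Fin r → Fin k}
    (hf : Function.Injective f) {W : Matrix (Fin l) (Fin r) ℝ} (hW : ∀ j c, W j c = w (f c) j) :
    Wᵀ * W = 1 := by
  ext c c'
  simp only [Matrix.mul_apply, transpose_apply, hW, hw, one_apply, hf.eq_iff]

lemma filter_val_lt_eq_map_castLEEmb {r : ℕ} (hrm : r ≤ m) :
    univ.filter (fun i : Fin m => (i : ℕ) < r) = univ.map (Fin.castLEEmb hrm) := by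
  ext i
  simp only [mem_filter, mem_univ, true_and, mem_map, Fin.castLEEmb_apply]
  exact ⟨fun h => ⟨⟨i, h⟩, rfl⟩, fun ⟨k, hk⟩ => hk ▸ k.isLt⟩

/-- Theorem 3: optimality condition for nuclear-norm regularized
least squares.  If `B_*` minimizes
`(1/2)·Σ_{(i,j)∈Ω}(B_{ij} − A_{ij})² + λ‖B‖_*` then
`λ⟨B_* − A_r, UVᵀ⟩ + λ‖P_{T⊥}(B_*)‖_* ≤ ⟨R_Ω(B_* − A), A_r − B_*⟩`. -/
theorem stmt2 (m n r : ℕ) (hrm : r ≤ m)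
    -- singular value decomposition of `A`
    (σ : Fin m → ℝ) (u : Fin m → Fin m → ℝ) (v : Fin m → Fin n → ℝ)
    (hσ0 : ∀ i, 0 ≤ σ i)
    (hu : ∀ i i' : Fin m, ∑ k, u i k * u i' k = if i = i' then 1 else 0)
    (hv : ∀ i i' : Fin m, ∑ k, v i k * v i' k = if i = i' then 1 else 0)
    (A : Matrix (Fin m) (Fin n) ℝ)
    -- the best rank-`r` approximation of `A`
    (Ar : Matrix (Fin m) (Fin n) ℝ)
    (hAr : Ar = ∑ i ∈ Finset.univ.filter (fun i : Fin m => (i : ℕ) < r),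
        σ i • Matrix.vecMulVec (u i) (v i))
    -- the matrices of the top `r` left/right singular vectors
    (U : Matrix (Fin m) (Fin r) ℝ) (hU : ∀ i k, U i k = u (Fin.castLE hrm k) i)
    (V : Matrix (Fin n) (Fin r) ℝ) (hV : ∀ j k, V j k = v (Fin.castLE hrm k) j)
    -- the regularized least-squares problem and its minimizer
    (Ω : Multiset (Fin m × Fin n)) (lam : ℝ) (hlam : 0 < lam)
    (Bstar : Matrix (Fin m) (Fin n) ℝ)
    (hmin : ∀ B : Matrix (Fin m) (Fin n) ℝ, obj Ω A lam Bstar ≤ obj Ω A lam B) :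
    lam * ip (Bstar - Ar) (U * Vᵀ) + lam * nuclearNorm (PTperp U V Bstar)
      ≤ ip (RΩ Ω (Bstar - A)) (Ar - Bstar) := by
  have hUU := transpose_mul_self_eq_one_of_orthonormal hu (Fin.castLE_injective hrm) hU
  have hVV := transpose_mul_self_eq_one_of_orthonormal hv (Fin.castLE_injective hrm) hV
  have hAr' : Ar = ∑ k, σ (Fin.castLE hrm k) • vecMulVec (Uᵀ k) (Vᵀ k) := by
    rw [hAr, filter_val_lt_eq_map_castLEEmb hrm, sum_map]
    congr! with k
    · ext i; exact (hU i k).symm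
    · ext j; exact (hV j k).symm
  have hsubgrad := nuclearNorm_add_ip_add_nuclearNorm_PTperp_le hUU hVV
    (s := fun k => σ (Fin.castLE hrm k)) (fun k => hσ0 _) Bstar
  rw [← hAr'] at hsubgrad
  calc lam * ip (Bstar - Ar) (U * Vᵀ) + lam * nuclearNorm (PTperp U V Bstar)
      = lam * (ip (Bstar - Ar) (U * Vᵀ) + nuclearNorm (PTperp U V Bstar)) := by ring
    _ ≤ lam * (nuclearNorm Bstar - nuclearNorm Ar) := by gcongr; linarith
    _ ≤ ip (RΩ Ω (Bstar - A)) (Ar - Bstar) :=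
      mul_nuclearNorm_sub_le_of_forall_obj_le hlam.le hmin Ar

end MC
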